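/- arXiv:2205.13867 — 2 statements merged into one kernel-verified Lean document; each statement's English description precedes it below -/
import Mathlib

section
/- Let c > 0, K ∈ ℝ, and π_max ∈ (0,1). Define f : [0, π_max] → ℝ by f(0) = 0 and f(π) = K·π − c/ln(π) for π ∈ (0, π_max]. If π* ∈ [0, π_max] is a minimizer of f over [0, π_max], then π* = 0, or π* = π_max, or (e^{−2} < π* < π_max and K + c/(π*·(ln π*)²) = 0). -/
/-!
At an interior minimizer `π⋆` of `f π = K π - c / ln π` the derivative `K + c / (π (ln π)²)`
vanishes. On `(0, e⁻²]` the map `π ↦ π (ln π)²` is strictly increasing (its derivative is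
`ln π (ln π + 2) > 0`), so if `π⋆ ≤ e⁻²` then `f' > 0` on `(0, π⋆)`, and `f` decreases strictly
to the left of `π⋆`, contradicting minimality.
-/

open Set Topology

lemma strictMonoOn_mul_log_sq :
    StrictMonoOn (fun x : ℝ => x * Real.log x ^ 2) (Ioc 0 (Real.exp (-2))) := by
  refine strictMonoOn_of_deriv_pos (convex_Ioc _ _)
    (continuousOn_id.mul ((Real.continuousOn_log.mono fun x hx => hx.1.ne').pow 2)) fun x hx => ?_
  rw [interior_Ioc] at hx
  have hlog : Real.log x < -2 := by simpa using Real.log_lt_log hx.1 hx.2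
  have hd : HasDerivAt (fun x : ℝ => x * Real.log x ^ 2) (Real.log x * (Real.log x + 2)) x := by
    refine ((hasDerivAt_id' x).mul ((Real.hasDerivAt_log hx.1.ne').fun_pow 2)).congr_deriv ?_
    field_simp [hx.1.ne']
    ring
  rw [hd.deriv]
  nlinarith

lemma hasDerivAt_mul_sub_div_log (K c : ℝ) {x : ℝ} (hx : Real.log x ≠ 0) :
    HasDerivAt (fun y => K * y - c / Real.log y) (K + c / (x * Real.log x ^ 2)) x := by
  have hx0 : x ≠ 0 := fun h => hx (by simp [h])
  refine (((hasDerivAt_id' x).const_mul K).sub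
    ((hasDerivAt_const x c).div (Real.hasDerivAt_log hx0) hx)).congr_deriv ?_
  field_simp
  ring

lemma add_div_mul_log_sq_pos_of_lt {K c x y : ℝ} (hc : 0 < c) (hy : 0 < y) (hyx : y < x)
    (hx : x ≤ Real.exp (-2)) (hKx : K + c / (x * Real.log x ^ 2) = 0) :
    0 < K + c / (y * Real.log y ^ 2) := by
  have hy1 : y < 1 := hyx.trans_le (hx.trans (Real.exp_le_one_iff.2 (by norm_num)))
  have hgy : 0 < y * Real.log y ^ 2 :=
    mul_pos hy (pow_two_pos_of_ne_zero (Real.log_neg hy hy1).ne)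
  have hgyx : y * Real.log y ^ 2 < x * Real.log x ^ 2 :=
    strictMonoOn_mul_log_sq ⟨hy, (hyx.trans_le hx).le⟩ ⟨hy.trans hyx, hx⟩ hyx
  linarith [div_lt_div_of_pos_left hc hgy hgyx]

lemma strictMonoOn_mul_sub_div_log {K c x : ℝ} (hc : 0 < c) (hx : x ≤ Real.exp (-2))
    (hKx : K + c / (x * Real.log x ^ 2) = 0) :
    StrictMonoOn (fun y => K * y - c / Real.log y) (Ioc 0 x) := by
  have hlog : ∀ y ∈ Ioc 0 x, Real.log y ≠ 0 := fun y hy =>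
    (Real.log_neg hy.1 (hy.2.trans_lt (hx.trans_lt (Real.exp_lt_one_iff.2 (by norm_num))))).ne
  refine strictMonoOn_of_deriv_pos (convex_Ioc _ _)
    (fun y hy => (hasDerivAt_mul_sub_div_log K c (hlog y hy)).continuousAt.continuousWithinAt)
    fun y hy => ?_
  rw [interior_Ioc] at hy
  rw [(hasDerivAt_mul_sub_div_log K c (hlog y (Ioo_subset_Ioc_self hy))).deriv]
  exact add_div_mul_log_sq_pos_of_lt hc hy.1 hy.2 hx hKx

theorem single_probability_minimizer_general (c K πmax : ℝ) (hc : 0 < c)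
    (hπmax : πmax ∈ Set.Ioo (0 : ℝ) 1)
    (f : ℝ → ℝ)
    (hf : ∀ π ∈ Set.Ioc (0 : ℝ) πmax, f π = K * π - c / Real.log π)
    (πs : ℝ) (hπs : πs ∈ Set.Icc (0 : ℝ) πmax)
    (hmin : ∀ x ∈ Set.Icc (0 : ℝ) πmax, f πs ≤ f x) :
    πs = 0 ∨ πs = πmax ∨
      (Real.exp (-2) < πs ∧ πs < πmax ∧
        K + c / (πs * (Real.log πs) ^ 2) = 0) := by
  rcases hπs.1.eq_or_lt with h0 | h0
  · exact Or.inl h0.symm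
  rcases hπs.2.eq_or_lt with hm | hm
  · exact Or.inr (Or.inl hm)
  have hf_eq : f =ᶠ[𝓝 πs] fun y => K * y - c / Real.log y := by
    filter_upwards [Ioo_mem_nhds h0 hm] with y hy using hf y ⟨hy.1, hy.2.le⟩
  have hstat : K + c / (πs * Real.log πs ^ 2) = 0 := by
    have hloc : IsLocalMin f πs := by
      filter_upwards [Ioo_mem_nhds h0 hm] with y hy using hmin y ⟨hy.1.le, hy.2.le⟩
    exact hloc.hasDerivAt_eq_zero ((hasDerivAt_mul_sub_div_log K c
      (Real.log_neg h0 (hm.trans hπmax.2)).ne).congr_of_eventuallyEq hf_eq)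
  refine Or.inr (Or.inr ⟨lt_of_not_ge fun hle => ?_, hm, hstat⟩)
  have hdecr : f (πs / 2) < f πs := by
    rw [hf _ ⟨by positivity, by linarith⟩, hf _ ⟨h0, hm.le⟩]
    exact strictMonoOn_mul_sub_div_log hc hle hstat ⟨by positivity, by linarith⟩ ⟨h0, le_rfl⟩
      (by linarith)
  exact (hmin _ ⟨by positivity, by linarith⟩).not_gt hdecr

/-- Proposition 5: for `c > 0`, `K ∈ ℝ` and `πmax ∈ (0,1)`, if `π⋆ ∈ [0, πmax]`
minimizes `f` over `[0, πmax]`, where `f 0 = 0` and `f π = K π - c / ln π` on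
`(0, πmax]`, then `π⋆ = 0`, or `π⋆ = πmax`, or `π⋆` is an interior stationary point
with `e⁻² < π⋆ < πmax` and `K + c / (π⋆ (ln π⋆)²) = 0`. -/
theorem single_probability_minimizer (c K πmax : ℝ) (hc : 0 < c)
    (hπmax : πmax ∈ Set.Ioo (0 : ℝ) 1)
    (f : ℝ → ℝ) (hf0 : f 0 = 0)
    (hf : ∀ π ∈ Set.Ioc (0 : ℝ) πmax, f π = K * π - c / Real.log π)
    (πs : ℝ) (hπs : πs ∈ Set.Icc (0 : ℝ) πmax)
    (hmin : ∀ x ∈ Set.Icc (0 : ℝ) πmax, f πs ≤ f x) :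
    πs = 0 ∨ πs = πmax ∨
      (Real.exp (-2) < πs ∧ πs < πmax ∧
        K + c / (πs * (Real.log πs) ^ 2) = 0) :=
  single_probability_minimizer_general c K πmax hc hπmax f hf πs hπs hmin
end

section
/- Let T ≥ 1, let a, b, k, q, r be real, σ_x², σ_d² ≥ 0, and fix an index t with 1 ≤ t ≤ T. For a vector π = (π_1, …, π_T) of reals, set α_i := a² + (b²k² + 2abk)·π_i, define the multilinear cost C_ml(π) := σ_x²·(q + r k² π_1) + σ_x²·∑_{ℓ=2}^{T} (q + r k² π_ℓ)·∏_{i=1}^{ℓ−1} α_i + σ_d²·∑_{ℓ=2}^{T} (q + r k² π_ℓ)·∑_{i=1}^{ℓ−1} ∏_{r'=i+1}^{ℓ−1} α_{r'}, the second moments s_1 := σ_x², s_{j+1} := α_j·s_j + σ_d², and F̄_{t+1} := (q + r k² π_{t+1}) + ∑_{ℓ=t+2}^{T} (q + r k² π_ℓ)·∏_{i=t+1}^{ℓ−1} α_i (with F̄_{T+1} := 0). Then for any two vectors π and π′ that agree in every coordinate except possibly the t-th, C_ml(π) − C_ml(π′) = s_t·(r k² + (2abk + b²k²)·F̄_{t+1})·(π_t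 − π′_t); in particular C_ml is an affine function of π_t with slope s_t·(r k² + (2abk + b²k²)·F̄_{t+1}), and s_t and F̄_{t+1} depend only on the coordinates other than π_t. -/
/-- The multilinear cost `C_ml` is affine in each coordinate `π_t`, with slope
`s_t (r k² + (2abk + b²k²) F̄_{t+1})`, where the second moment `s_t` and the cost-to-go
factor `F̄_{t+1}` depend only on the coordinates other than `π_t`. -/
theorem multilinear_cost_affine_in_each_coordinate
    (T : ℕ) (hT : 1 ≤ T) (a b k q r σx2 σd2 : ℝ) (hσx2 : 0 ≤ σx2) (hσd2 : 0 ≤ σd2)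
    (t : ℕ) (ht1 : 1 ≤ t) (htT : t ≤ T)
    (A : (ℕ → ℝ) → ℕ → ℝ)
    (hA : ∀ v : ℕ → ℝ, ∀ i, A v i = a ^ 2 + (b ^ 2 * k ^ 2 + 2 * a * b * k) * v i)
    (Cml : (ℕ → ℝ) → ℝ)
    (hCml : ∀ v : ℕ → ℝ,
      Cml v = σx2 * (q + r * k ^ 2 * v 1) +
        σx2 * ∑ ℓ ∈ Finset.Icc 2 T,
          (q + r * k ^ 2 * v ℓ) * ∏ i ∈ Finset.Icc 1 (ℓ - 1), A v i +
        σd2 * ∑ ℓ ∈ Finset.Icc 2 T,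
          (q + r * k ^ 2 * v ℓ) *
            ∑ i ∈ Finset.Icc 1 (ℓ - 1), ∏ r' ∈ Finset.Icc (i + 1) (ℓ - 1), A v r')
    (s : (ℕ → ℝ) → ℕ → ℝ)
    (hs1 : ∀ v : ℕ → ℝ, s v 1 = σx2)
    (hsrec : ∀ v : ℕ → ℝ, ∀ j, 1 ≤ j → s v (j + 1) = A v j * s v j + σd2)
    (F : (ℕ → ℝ) → ℕ → ℝ)
    (hF : ∀ v : ℕ → ℝ, ∀ u, 1 ≤ u → u ≤ T →
      F v u = (q + r * k ^ 2 * v u) +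
        ∑ ℓ ∈ Finset.Icc (u + 1) T,
          (q + r * k ^ 2 * v ℓ) * ∏ i ∈ Finset.Icc u (ℓ - 1), A v i)
    (hFT1 : ∀ v : ℕ → ℝ, F v (T + 1) = 0) :
    ∀ π π' : ℕ → ℝ, (∀ j, j ≠ t → π j = π' j) →
      Cml π - Cml π' =
        s π t * (r * k ^ 2 + (2 * a * b * k + b ^ 2 * k ^ 2) * F π (t + 1)) *
          (π t - π' t) ∧
      s π t = s π' t ∧ F π (t + 1) = F π' (t + 1) := by
    -- general unrolling of the recursion for s
  have hunroll : ∀ v : ℕ → ℝ, ∀ u ℓ : ℕ, 1 ≤ u → u ≤ ℓ →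
      s v ℓ = s v u * ∏ i ∈ Finset.Icc u (ℓ - 1), A v i +
        σd2 * ∑ i ∈ Finset.Icc u (ℓ - 1), ∏ r' ∈ Finset.Icc (i + 1) (ℓ - 1), A v r' := by
    intro v u ℓ hu hul
    induction ℓ, hul using Nat.le_induction with
    | base =>
        rw [Finset.Icc_eq_empty (by omega)]
        simp
    | succ n hn ih =>
        obtain ⟨m, rfl⟩ : ∃ m, n = m + 1 := ⟨n - 1, by omega⟩
        rw [hsrec v (m + 1) (by omega), ih]
        simp only [Nat.add_sub_cancel] at *
        have hsum : ∀ i ∈ Finset.Icc u m,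
            (∏ r' ∈ Finset.Icc (i + 1) (m + 1), A v r')
              = (∏ r' ∈ Finset.Icc (i + 1) m, A v r') * A v (m + 1) := by
          intro i hi
          exact Finset.prod_Icc_succ_top (by
            have := (Finset.mem_Icc.mp hi).2; omega) _
        rw [Finset.prod_Icc_succ_top (by omega : u ≤ m + 1),
          Finset.sum_Icc_succ_top (by omega : u ≤ m + 1),
          Finset.Icc_eq_empty (by omega : ¬ (m + 1 + 1 ≤ m + 1)), Finset.prod_empty,
          Finset.sum_congr rfl hsum, ← Finset.sum_mul]
        ring
  -- Cml as a single sum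
  have hIccT : Finset.Icc 1 T = insert 1 (Finset.Icc 2 T) := by
    ext x; simp [Finset.mem_Icc]; omega
  have hCsum : ∀ v : ℕ → ℝ,
      Cml v = ∑ ℓ ∈ Finset.Icc 1 T, (q + r * k ^ 2 * v ℓ) * s v ℓ := by
    intro v
    rw [hCml, hIccT, Finset.sum_insert (by simp)]
    have h2 : ∀ ℓ ∈ Finset.Icc 2 T, (q + r * k ^ 2 * v ℓ) * s v ℓ =
        σx2 * ((q + r * k ^ 2 * v ℓ) * ∏ i ∈ Finset.Icc 1 (ℓ - 1), A v i) +
        σd2 * ((q + r * k ^ 2 * v ℓ) *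
          ∑ i ∈ Finset.Icc 1 (ℓ - 1), ∏ r' ∈ Finset.Icc (i + 1) (ℓ - 1), A v r') := by
      intro ℓ hℓ
      rw [hunroll v 1 ℓ le_rfl (by
        have := (Finset.mem_Icc.mp hℓ).1; omega), hs1]
      ring
    rw [Finset.sum_congr rfl h2, Finset.sum_add_distrib, ← Finset.mul_sum, ← Finset.mul_sum,
      hs1]
    ring
  intro π π' h
  have hAeq : ∀ i, i ≠ t → A π i = A π' i := by
    intro i hi; rw [hA, hA, h i hi]
  have hp : ∀ lo hi : ℕ, (t < lo ∨ hi < t) →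
      (∏ i ∈ Finset.Icc lo hi, A π i) = ∏ i ∈ Finset.Icc lo hi, A π' i := by
    intro lo hi hc
    exact Finset.prod_congr rfl fun i hi' => hAeq i (by
      have := Finset.mem_Icc.mp hi'; omega)
  have hsEq : ∀ j, 1 ≤ j → j ≤ t → s π j = s π' j := by
    intro j h1 h2
    rw [hunroll π 1 j le_rfl h1, hunroll π' 1 j le_rfl h1, hs1, hs1,
      hp 1 (j - 1) (Or.inr (by omega)),
      Finset.sum_congr rfl (fun i _ => hp (i + 1) (j - 1) (Or.inr (by omega)))]
  have hFeq : F π (t + 1) = F π' (t + 1) := by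
    rcases eq_or_lt_of_le htT with heq | hlt
    · subst heq; rw [hFT1, hFT1]
    · rw [hF π (t + 1) (by omega) (by omega), hF π' (t + 1) (by omega) (by omega),
        h (t + 1) (by omega),
        Finset.sum_congr rfl (fun ℓ hℓ => by
          rw [h ℓ (by have := (Finset.mem_Icc.mp hℓ).1; omega),
            hp (t + 1) (ℓ - 1) (Or.inl (by omega))])]
  have hFsum : F π (t + 1) = ∑ ℓ ∈ Finset.Icc (t + 1) T,
      (q + r * k ^ 2 * π ℓ) * ∏ i ∈ Finset.Icc (t + 1) (ℓ - 1), A π i := by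
    rcases eq_or_lt_of_le htT with heq | hlt
    · subst heq
      rw [hFT1, Finset.Icc_eq_empty (by omega), Finset.sum_empty]
    · rw [hF π (t + 1) (by omega) (by omega)]
      have hins : Finset.Icc (t + 1) T = insert (t + 1) (Finset.Icc (t + 2) T) := by
        ext x; simp [Finset.mem_Icc]; omega
      rw [hins, Finset.sum_insert (by simp [Finset.mem_Icc])]
      simp only [Nat.add_sub_cancel]
      rw [Finset.Icc_eq_empty (by omega : ¬ (t + 1 ≤ t)), Finset.prod_empty]
      ring
  have hsdiff : ∀ ℓ, t < ℓ →
      s π ℓ - s π' ℓ = s π t * ((b ^ 2 * k ^ 2 + 2 * a * b * k) * (π t - π' t)) *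
        ∏ i ∈ Finset.Icc (t + 1) (ℓ - 1), A π i := by
    intro ℓ hℓ
    have hins : Finset.Icc t (ℓ - 1) = insert t (Finset.Icc (t + 1) (ℓ - 1)) := by
      ext x; simp [Finset.mem_Icc]; omega
    rw [hunroll π t ℓ ht1 (le_of_lt hℓ), hunroll π' t ℓ ht1 (le_of_lt hℓ), hins,
      Finset.prod_insert (by simp [Finset.mem_Icc]),
      Finset.prod_insert (by simp [Finset.mem_Icc]),
      Finset.sum_insert (by simp [Finset.mem_Icc]),
      Finset.sum_insert (by simp [Finset.mem_Icc]),
      ← hsEq t ht1 le_rfl,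
      ← hp (t + 1) (ℓ - 1) (Or.inl (by omega)),
      ← Finset.sum_congr rfl (fun i hi => hp (i + 1) (ℓ - 1) (Or.inl (by
        have := (Finset.mem_Icc.mp hi).1; omega))),
      hA π t, hA π' t]
    ring
  refine ⟨?_, hsEq t ht1 le_rfl, hFeq⟩
  rw [hCsum π, hCsum π', ← Finset.sum_sub_distrib]
  have hsplit : Finset.Icc 1 T = Finset.Icc 1 t ∪ Finset.Icc (t + 1) T := by
    ext x; simp [Finset.mem_Icc]; omega
  have hdisj : Disjoint (Finset.Icc 1 t) (Finset.Icc (t + 1) T) := by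
    rw [Finset.disjoint_left]
    intro x hx hx'
    have := Finset.mem_Icc.mp hx
    have := Finset.mem_Icc.mp hx'
    omega
  rw [hsplit, Finset.sum_union hdisj]
  have h1 : ∑ ℓ ∈ Finset.Icc 1 t,
      ((q + r * k ^ 2 * π ℓ) * s π ℓ - (q + r * k ^ 2 * π' ℓ) * s π' ℓ)
      = r * k ^ 2 * (π t - π' t) * s π t := by
    have hins : Finset.Icc 1 t = insert t (Finset.Icc 1 (t - 1)) := by
      ext x; simp [Finset.mem_Icc]; omega
    rw [hins, Finset.sum_insert (by
      intro hm; have := Finset.mem_Icc.mp hm; omega)]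
    have hz : ∑ ℓ ∈ Finset.Icc 1 (t - 1),
        ((q + r * k ^ 2 * π ℓ) * s π ℓ - (q + r * k ^ 2 * π' ℓ) * s π' ℓ) = 0 := by
      refine Finset.sum_eq_zero fun ℓ hℓ => ?_
      have hm := Finset.mem_Icc.mp hℓ
      rw [h ℓ (by omega), hsEq ℓ (by omega) (by omega)]
      ring
    rw [hz, ← hsEq t ht1 le_rfl]
    ring
  have h2 : ∑ ℓ ∈ Finset.Icc (t + 1) T,
      ((q + r * k ^ 2 * π ℓ) * s π ℓ - (q + r * k ^ 2 * π' ℓ) * s π' ℓ)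
      = s π t * ((b ^ 2 * k ^ 2 + 2 * a * b * k) * (π t - π' t)) * F π (t + 1) := by
    have hcongr : ∀ ℓ ∈ Finset.Icc (t + 1) T,
        (q + r * k ^ 2 * π ℓ) * s π ℓ - (q + r * k ^ 2 * π' ℓ) * s π' ℓ
        = s π t * ((b ^ 2 * k ^ 2 + 2 * a * b * k) * (π t - π' t)) *
            ((q + r * k ^ 2 * π ℓ) * ∏ i ∈ Finset.Icc (t + 1) (ℓ - 1), A π i) := by
      intro ℓ hℓ
      have hm := Finset.mem_Icc.mp hℓ
      rw [← h ℓ (by omega)]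
      linear_combination (q + r * k ^ 2 * π ℓ) * hsdiff ℓ (by omega)
    rw [Finset.sum_congr rfl hcongr, ← Finset.mul_sum, ← hFsum]
  rw [h1, h2]
  ring
end
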